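/- Consider the ResGCN layer H_{l+1} = σ(ÂH_lW_l) + αH_l, with 0 ≤ α ≤ 1 and the assumptions of the generic GCN case. Then d_M(H_{l+1}) ≤ (sλ + α) d_M(H_l), so if sλ + α < 1 then d_M(H_l) ≤ (sλ+α)^l d_M(H_0) → 0 as l → ∞. -/

import Mathlib

open Matrix Filter

/-- The Frobenius norm on real `N × C` matrices. -/
noncomputable def frobNorm {N C : ℕ} (H : Matrix (Fin N) (Fin C) ℝ) : ℝ :=
  Real.sqrt (∑ i, ∑ j, (H i j) ^ 2)

/-- The Frobenius distance from a matrix to a set of matrices. -/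
noncomputable def distTo {N C : ℕ} (S : Set (Matrix (Fin N) (Fin C) ℝ))
    (H : Matrix (Fin N) (Fin C) ℝ) : ℝ :=
  sInf ((fun Y => frobNorm (H - Y)) '' S)

/-- Entrywise ReLU of a matrix. -/
def relu {N C : ℕ} (H : Matrix (Fin N) (Fin C) ℝ) : Matrix (Fin N) (Fin C) ℝ :=
  Matrix.of fun i j => max (H i j) 0

/-!
Measure `d_M` in the Frobenius norm. Then `d_M(X)` is the norm of `X` in the quotient by the
subspace `M = {E C}`, which gives subadditivity and homogeneity. Each of `X ↦ σ(X)`, `X ↦ X W`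
and `X ↦ Â X` maps `M` into itself and contracts `d_M`: the ReLU by `1`, since `σ(E C) = E σ(C)`
for non-negative `E` with disjoint row supports; `W` by `s`; and `Â` by `λ`, since `Â` fixes `M`
and acts with eigenvalues of modulus at most `λ` on its orthogonal complement. So `d_M` contracts
by `sλ + α` per layer.
-/

open Metric

attribute [local instance] Matrix.frobeniusNormedAddCommGroup Matrix.frobeniusNormedSpace

theorem Metric.infDist_le_mul_infDist {α β : Type*} [PseudoMetricSpace α] [PseudoMetricSpace β]
    {s : Set α} {t : Set β} {x : α} {z : β} {c : ℝ} (hs : s.Nonempty) (hc : 0 ≤ c)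
    (h : ∀ y ∈ s, infDist z t ≤ c * dist x y) : infDist z t ≤ c * infDist x s := by
  have := hs.to_subtype
  rw [infDist_eq_iInf (x := x), Real.mul_iInf_of_nonneg hc]
  exact le_ciInf fun y => h y y.2

theorem LipschitzWith.infDist_le {α β : Type*} [PseudoMetricSpace α] [PseudoMetricSpace β]
    {s : Set α} {t : Set β} {f : α → β} {K : NNReal} (hf : LipschitzWith K f) (hs : s.Nonempty)
    (hst : Set.MapsTo f s t) (x : α) : infDist (f x) t ≤ K * infDist x s :=
  infDist_le_mul_infDist hs K.2 fun _ hy =>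
    (infDist_le_dist_of_mem (hst hy)).trans (hf.dist_le_mul _ _)

namespace Submodule

variable {M : Type*} [SeminormedAddCommGroup M] [NormedSpace ℝ M] (S : Submodule ℝ M)

theorem infDist_eq_norm_mkQ (x : M) : infDist x S = ‖S.mkQ x‖ :=
  (QuotientAddGroup.norm_mk (S := S.toAddSubgroup) x).symm

theorem infDist_add_le (x y : M) : infDist (x + y) S ≤ infDist x S + infDist y S := by
  simpa only [infDist_eq_norm_mkQ, map_add] using norm_add_le _ _

theorem infDist_smul (a : ℝ) (x : M) : infDist (a • x) S = |a| * infDist x S := by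
  simp only [infDist_eq_norm_mkQ, map_smul, norm_smul, Real.norm_eq_abs]

end Submodule

theorem le_geom_and_tendsto_zero {u : ℕ → ℝ} {q : ℝ} (hq0 : 0 ≤ q) (hq1 : q < 1)
    (hu0 : ∀ n, 0 ≤ u n) (hu : ∀ n, u (n + 1) ≤ q * u n) :
    (∀ n, u n ≤ q ^ n * u 0) ∧ Tendsto u atTop (nhds 0) := by
  have hgeom : ∀ n, u n ≤ q ^ n * u 0 := fun n => le_geom hq0 n fun k _ => hu k
  refine ⟨hgeom, squeeze_zero hu0 hgeom ?_⟩
  simpa using (tendsto_pow_atTop_nhds_zero_of_lt_one hq0 hq1).mul_const (u 0)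

namespace Matrix

variable {m n p : Type*} [Fintype m] [Fintype n] [Fintype p]

theorem frobenius_norm_sq_eq_sum (A : Matrix m n ℝ) : ‖A‖ ^ 2 = ∑ i, ∑ j, A i j ^ 2 := by
  rw [frobenius_norm_def, ← Real.sqrt_eq_rpow, Real.sq_sqrt (by positivity)]
  simp [Real.norm_eq_abs, sq_abs]

theorem frobenius_norm_sq_eq_sum_col (A : Matrix m n ℝ) : ‖A‖ ^ 2 = ∑ j, A.col j ⬝ᵥ A.col j := by
  rw [frobenius_norm_sq_eq_sum, Finset.sum_comm]
  simp [dotProduct, sq]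

theorem norm_mul_le_of_vecMul {W : Matrix n p ℝ} {s : ℝ} (hs : 0 ≤ s)
    (hW : ∀ x : n → ℝ, ∑ j, (x ᵥ* W) j ^ 2 ≤ s ^ 2 * ∑ j, x j ^ 2) (Z : Matrix m n ℝ) :
    ‖Z * W‖ ≤ s * ‖Z‖ := by
  rw [← sq_le_sq₀ (norm_nonneg _) (by positivity), mul_pow, frobenius_norm_sq_eq_sum,
    frobenius_norm_sq_eq_sum, Finset.mul_sum]
  exact Finset.sum_le_sum fun i _ => hW (Z i)

/-- Pythagoras for the Frobenius norm: `R` is orthogonal to every matrix `E D`. -/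
theorem norm_le_norm_add_mul {E : Matrix m n ℝ} {R : Matrix m p ℝ} (hR : Eᵀ * R = 0)
    (D : Matrix n p ℝ) : ‖R‖ ≤ ‖R + E * D‖ := by
  rw [← sq_le_sq₀ (norm_nonneg _) (norm_nonneg _), frobenius_norm_sq_eq_sum_col,
    frobenius_norm_sq_eq_sum_col]
  refine Finset.sum_le_sum fun j _ => ?_
  have horth : R.col j ⬝ᵥ E *ᵥ D.col j = 0 := by
    rw [dotProduct_mulVec, ← mulVec_transpose]
    change (Eᵀ * R).col j ⬝ᵥ D.col j = 0
    rw [hR]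
    exact zero_dotProduct _
  have hsq := dotProduct_self_star_nonneg (E *ᵥ D.col j)
  rw [star_trivial] at hsq
  change _ ≤ (R.col j + E *ᵥ D.col j) ⬝ᵥ (R.col j + E *ᵥ D.col j)
  rw [add_dotProduct, dotProduct_add, dotProduct_add, horth, dotProduct_comm (E *ᵥ _), horth]
  linarith

variable [DecidableEq n] {A : Matrix n n ℝ} {lam : ℝ}

/-- Parseval in an orthonormal eigenbasis of `A`, in which `v` has no weight on the
eigenvalue-`1` eigenvectors. -/
theorem IsSymm.mulVec_dotProduct_le (hA : A.IsSymm)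
    (hspec : ∀ (μ : ℝ) (v : n → ℝ), v ≠ 0 → A *ᵥ v = μ • v → μ = 1 ∨ |μ| ≤ lam)
    {v : n → ℝ} (hv : ∀ u, A *ᵥ u = u → u ⬝ᵥ v = 0) :
    A *ᵥ v ⬝ᵥ A *ᵥ v ≤ lam ^ 2 * (v ⬝ᵥ v) := by
  have hH : A.IsHermitian := by rw [IsHermitian, conjTranspose_eq_transpose_of_trivial]; exact hA
  set b := hH.eigenvectorBasis
  have parseval : ∀ x : n → ℝ, x ⬝ᵥ x = ∑ i, (⇑(b i) ⬝ᵥ x) ^ 2 := fun x => by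
    have := b.sum_inner_mul_inner (WithLp.toLp 2 x) (WithLp.toLp 2 x)
    simp only [EuclideanSpace.inner_eq_star_dotProduct, star_trivial] at this
    simp only [← this, sq, dotProduct_comm x]
  have hcoord : ∀ i, ⇑(b i) ⬝ᵥ A *ᵥ v = hH.eigenvalues i * (⇑(b i) ⬝ᵥ v) := fun i => by
    rw [dotProduct_mulVec, ← mulVec_transpose, hA.eq, hH.mulVec_eigenvectorBasis, smul_dotProduct,
      smul_eq_mul]
  have hterm : ∀ i, (hH.eigenvalues i * (⇑(b i) ⬝ᵥ v)) ^ 2 ≤ lam ^ 2 * (⇑(b i) ⬝ᵥ v) ^ 2 := by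
    intro i
    have hne : (⇑(b i) : n → ℝ) ≠ 0 := fun h => b.orthonormal.ne_zero i (by ext k; simp [h])
    rcases hspec _ _ hne (hH.mulVec_eigenvectorBasis i) with h1 | hlam
    · have hfix : A *ᵥ ⇑(b i) = ⇑(b i) := by rw [hH.mulVec_eigenvectorBasis, h1, one_smul]
      simp [hv _ hfix]
    · rw [mul_pow]
      gcongr ?_ * _
      simpa only [sq_abs] using pow_le_pow_left₀ (abs_nonneg _) hlam 2
  calc A *ᵥ v ⬝ᵥ A *ᵥ v = ∑ i, (hH.eigenvalues i * (⇑(b i) ⬝ᵥ v)) ^ 2 := by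
        simp only [parseval (A *ᵥ v), hcoord]
    _ ≤ ∑ i, lam ^ 2 * (⇑(b i) ⬝ᵥ v) ^ 2 := Finset.sum_le_sum fun i _ => hterm i
    _ = lam ^ 2 * (v ⬝ᵥ v) := by rw [← Finset.mul_sum, parseval v]

theorem IsSymm.norm_mul_le (hA : A.IsSymm) (hlam : 0 ≤ lam)
    (hspec : ∀ (μ : ℝ) (v : n → ℝ), v ≠ 0 → A *ᵥ v = μ • v → μ = 1 ∨ |μ| ≤ lam)
    {R : Matrix n p ℝ} (hR : ∀ u, A *ᵥ u = u → u ᵥ* R = 0) :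
    ‖A * R‖ ≤ lam * ‖R‖ := by
  rw [← sq_le_sq₀ (norm_nonneg _) (by positivity), mul_pow, frobenius_norm_sq_eq_sum_col,
    frobenius_norm_sq_eq_sum_col, Finset.mul_sum]
  exact Finset.sum_le_sum fun j _ =>
    hA.mulVec_dotProduct_le hspec fun u hu => congrFun (hR u hu) j

end Matrix

namespace Matrix

variable {m k p : Type*} [Fintype k]

def mulLeftRange (E : Matrix m k ℝ) (p : Type*) : Submodule ℝ (Matrix m p ℝ) where
  carrier := {H | ∃ D, H = E * D}
  add_mem' := by
    rintro _ _ ⟨D₁, rfl⟩ ⟨D₂, rfl⟩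
    exact ⟨D₁ + D₂, (Matrix.mul_add _ _ _).symm⟩
  zero_mem' := ⟨0, (Matrix.mul_zero _).symm⟩
  smul_mem' := by
    rintro a _ ⟨D, rfl⟩
    exact ⟨a • D, (Matrix.mul_smul _ _ _).symm⟩

theorem mul_mem_mulLeftRange (E : Matrix m k ℝ) (D : Matrix k p ℝ) :
    E * D ∈ E.mulLeftRange p :=
  ⟨D, rfl⟩

variable [Fintype m] [Fintype p]

theorem infDist_mul_right_le {q : Type*} [Fintype q] (E : Matrix m k ℝ) {W : Matrix p q ℝ}
    {s : ℝ} (hs : 0 ≤ s) (hW : ∀ x : p → ℝ, ∑ j, (x ᵥ* W) j ^ 2 ≤ s ^ 2 * ∑ j, x j ^ 2)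
    (X : Matrix m p ℝ) :
    infDist (X * W) (E.mulLeftRange q) ≤ s * infDist X (E.mulLeftRange p) := by
  refine infDist_le_mul_infDist ⟨0, zero_mem _⟩ hs ?_
  rintro _ ⟨D, rfl⟩
  calc infDist (X * W) _ ≤ dist (X * W) (E * (D * W)) :=
        infDist_le_dist_of_mem (mul_mem_mulLeftRange E _)
    _ ≤ s * dist X (E * D) := by
        rw [dist_eq_norm, dist_eq_norm, ← Matrix.mul_assoc, ← Matrix.sub_mul]
        exact norm_mul_le_of_vecMul hs hW _

variable [DecidableEq m] [DecidableEq k] {A : Matrix m m ℝ} {lam : ℝ}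

/-- Project `X` onto `E Eᵀ X ∈ M`, which `A` fixes; the residual is orthogonal to the fixed
vectors of `A`, where `A` contracts by `lam`. -/
theorem IsSymm.infDist_mul_le (hA : A.IsSymm) {E : Matrix m k ℝ} (hE : Eᵀ * E = 1)
    (hlam : 0 ≤ lam) (hfix : ∀ v, A *ᵥ v = v ↔ v ∈ Submodule.span ℝ (Set.range E.col))
    (hspec : ∀ (μ : ℝ) (v : m → ℝ), v ≠ 0 → A *ᵥ v = μ • v → μ = 1 ∨ |μ| ≤ lam)
    (X : Matrix m p ℝ) :
    infDist (A * X) (E.mulLeftRange p) ≤ lam * infDist X (E.mulLeftRange p) := by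
  have hAE : A * E = E := ext_col fun j => (hfix _).mpr (Submodule.subset_span ⟨j, rfl⟩)
  set R := X - E * (Eᵀ * X)
  have hR : Eᵀ * R = 0 := by
    rw [Matrix.mul_sub, ← Matrix.mul_assoc, hE, Matrix.one_mul, sub_self]
  have hRfix : ∀ u, A *ᵥ u = u → u ᵥ* R = 0 := by
    intro u hu
    obtain ⟨c, rfl⟩ : ∃ c, E *ᵥ c = u := by
      rwa [hfix, ← range_mulVecLin] at hu
    rw [← vecMul_transpose, vecMul_vecMul, hR, vecMul_zero]
  refine infDist_le_mul_infDist ⟨0, zero_mem _⟩ hlam ?_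
  rintro _ ⟨D, rfl⟩
  calc infDist (A * X) _ ≤ dist (A * X) (E * (Eᵀ * X)) :=
        infDist_le_dist_of_mem (mul_mem_mulLeftRange E _)
    _ = ‖A * R‖ := by rw [dist_eq_norm, Matrix.mul_sub, ← Matrix.mul_assoc A E, hAE]
    _ ≤ lam * ‖R‖ := hA.norm_mul_le hlam hspec hRfix
    _ ≤ lam * dist X (E * D) := by
        rw [dist_eq_norm]
        gcongr
        simpa [R, Matrix.mul_sub] using norm_le_norm_add_mul hR (Eᵀ * X - D)

end Matrix

section ResGCN

variable {N M C : ℕ}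

theorem frobNorm_eq_norm (X : Matrix (Fin N) (Fin C) ℝ) : frobNorm X = ‖X‖ := by
  rw [frobNorm, ← frobenius_norm_sq_eq_sum, Real.sqrt_sq (norm_nonneg _)]

theorem distTo_eq_infDist (S : Set (Matrix (Fin N) (Fin C) ℝ)) (X : Matrix (Fin N) (Fin C) ℝ) :
    distTo S X = infDist X S := by
  simp only [distTo, frobNorm_eq_norm, infDist_eq_iInf, dist_eq_norm, sInf_image']

theorem relu_mul_eq_mul_relu {E : Matrix (Fin N) (Fin M) ℝ} (hnonneg : ∀ i m, 0 ≤ E i m)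
    (hdisj : ∀ i m m', E i m ≠ 0 → E i m' ≠ 0 → m = m') (D : Matrix (Fin M) (Fin C) ℝ) :
    relu (E * D) = E * relu D := by
  ext i j
  simp only [relu, of_apply, mul_apply]
  by_cases h : ∃ m₀, E i m₀ ≠ 0
  · obtain ⟨m₀, hm₀⟩ := h
    have hzero : ∀ m ≠ m₀, E i m = 0 := fun m hm => not_imp_comm.mp (hdisj i m m₀ · hm₀) hm
    rw [Fintype.sum_eq_single m₀ fun m hm => by rw [hzero m hm, zero_mul],
      Fintype.sum_eq_single m₀ fun m hm => by rw [hzero m hm, zero_mul],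
      mul_max_of_nonneg _ _ (hnonneg i m₀), mul_zero]
  · push Not at h
    simp [h]

theorem lipschitzWith_relu : LipschitzWith 1 (relu : Matrix (Fin N) (Fin C) ℝ → _) := by
  refine LipschitzWith.of_dist_le_mul fun X Y => ?_
  rw [NNReal.coe_one, one_mul, dist_eq_norm, dist_eq_norm,
    ← sq_le_sq₀ (norm_nonneg _) (norm_nonneg _), frobenius_norm_sq_eq_sum,
    frobenius_norm_sq_eq_sum]
  refine Finset.sum_le_sum fun i _ => Finset.sum_le_sum fun j _ => ?_
  simp only [Matrix.sub_apply, relu, of_apply]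
  rw [sq_le_sq]
  exact abs_max_sub_max_le_abs _ _ _

theorem infDist_relu_mul_mul_le {A : Matrix (Fin N) (Fin N) ℝ} (hA : A.IsSymm)
    {E : Matrix (Fin N) (Fin M) ℝ} (hE : Eᵀ * E = 1) (hnonneg : ∀ i m, 0 ≤ E i m)
    (hdisj : ∀ i m m', E i m ≠ 0 → E i m' ≠ 0 → m = m') {lam : ℝ} (hlam : 0 ≤ lam)
    (hfix : ∀ v, A *ᵥ v = v ↔ v ∈ Submodule.span ℝ (Set.range E.col))
    (hspec : ∀ (μ : ℝ) (v : Fin N → ℝ), v ≠ 0 → A *ᵥ v = μ • v → μ = 1 ∨ |μ| ≤ lam)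
    {W : Matrix (Fin C) (Fin C) ℝ} {s : ℝ} (hs : 0 ≤ s)
    (hW : ∀ x : Fin C → ℝ, ∑ j, (x ᵥ* W) j ^ 2 ≤ s ^ 2 * ∑ j, x j ^ 2)
    (X : Matrix (Fin N) (Fin C) ℝ) :
    infDist (relu (A * X * W)) (E.mulLeftRange (Fin C)) ≤
      s * lam * infDist X (E.mulLeftRange (Fin C)) := by
  have hrelu : Set.MapsTo relu (E.mulLeftRange (Fin C) : Set (Matrix (Fin N) (Fin C) ℝ))
      (E.mulLeftRange (Fin C)) := by
    rintro _ ⟨D, rfl⟩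
    rw [relu_mul_eq_mul_relu hnonneg hdisj]
    exact mul_mem_mulLeftRange E _
  calc infDist (relu (A * X * W)) (E.mulLeftRange (Fin C))
      ≤ infDist (A * X * W) (E.mulLeftRange (Fin C)) := by
        simpa using lipschitzWith_relu.infDist_le ⟨0, zero_mem _⟩ hrelu (A * X * W)
    _ ≤ s * infDist (A * X) (E.mulLeftRange (Fin C)) := infDist_mul_right_le E hs hW _
    _ ≤ s * (lam * infDist X (E.mulLeftRange (Fin C))) := by
        gcongr
        exact hA.infDist_mul_le hE hlam hfix hspec X
    _ = s * lam * infDist X (E.mulLeftRange (Fin C)) := (mul_assoc _ _ _).symm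

end ResGCN

theorem resgcn_over_smoothing_general
    (N M C : ℕ) (hatA : Matrix (Fin N) (Fin N) ℝ) (hsymm : hatA.IsSymm)
    (E : Matrix (Fin N) (Fin M) ℝ) (hortho : Eᵀ * E = 1)
    (hnonneg : ∀ i m, 0 ≤ E i m)
    (hdisj : ∀ i m m', E i m ≠ 0 → E i m' ≠ 0 → m = m')
    (lam : ℝ) (hlam0 : 0 ≤ lam)
    (hEig1 : ∀ v : Fin N → ℝ, hatA.mulVec v = v ↔
      v ∈ Submodule.span ℝ (Set.range fun m => fun i => E i m))
    (hOther : ∀ (μ : ℝ) (v : Fin N → ℝ), v ≠ 0 → hatA.mulVec v = μ • v →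
      μ = 1 ∨ |μ| ≤ lam)
    (s : ℝ) (hs : 0 ≤ s)
    (W : ℕ → Matrix (Fin C) (Fin C) ℝ)
    (hW : ∀ l, ∀ x : Fin C → ℝ,
      ∑ j, (Matrix.vecMul x (W l) j) ^ 2 ≤ s ^ 2 * ∑ j, (x j) ^ 2)
    (α : ℝ) (hα0 : 0 ≤ α)
    (MS : Set (Matrix (Fin N) (Fin C) ℝ))
    (hMS : MS = {H | ∃ Cm : Matrix (Fin M) (Fin C) ℝ, H = E * Cm})
    (H : ℕ → Matrix (Fin N) (Fin C) ℝ)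
    (hrec : ∀ l, H (l + 1) = relu (hatA * H l * W l) + α • H l) :
    (∀ l, distTo MS (H (l + 1)) ≤ (s * lam + α) * distTo MS (H l)) ∧
    (s * lam + α < 1 →
      (∀ l, distTo MS (H l) ≤ (s * lam + α) ^ l * distTo MS (H 0)) ∧
      Tendsto (fun l => distTo MS (H l)) atTop (nhds 0)) := by
  set V := E.mulLeftRange (Fin C)
  have hd : distTo MS = fun X => infDist X V := by
    ext X
    rw [distTo_eq_infDist, hMS]
    rfl
  have hstep : ∀ l, infDist (H (l + 1)) V ≤ (s * lam + α) * infDist (H l) V := fun l =>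
    calc infDist (H (l + 1)) V
        ≤ infDist (relu (hatA * H l * W l)) V + infDist (α • H l) V := by
          rw [hrec]
          exact V.infDist_add_le _ _
      _ = infDist (relu (hatA * H l * W l)) V + α * infDist (H l) V := by
          rw [V.infDist_smul, abs_of_nonneg hα0]
      _ ≤ s * lam * infDist (H l) V + α * infDist (H l) V := by
          gcongr
          exact infDist_relu_mul_mul_le hsymm hortho hnonneg hdisj hlam0 hEig1 hOther hs (hW l) _
      _ = (s * lam + α) * infDist (H l) V := by ring
  simp only [hd]
  exact ⟨hstep, fun hlt =>
    le_geom_and_tendsto_zero (by positivity) hlt (fun _ => infDist_nonneg) hstep⟩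

/-- ResGCN `H_{l+1} = σ(Â H_l W_l) + α H_l` over-smooths with factor `sλ + α`:
`d_M(H_{l+1}) ≤ (sλ + α) d_M(H_l)`, and if `sλ + α < 1` then
`d_M(H_l) ≤ (sλ + α)^l d_M(H_0) → 0`. -/
theorem resgcn_over_smoothing
    (N M C : ℕ) (hatA : Matrix (Fin N) (Fin N) ℝ) (hsymm : hatA.IsSymm)
    (E : Matrix (Fin N) (Fin M) ℝ) (hortho : Eᵀ * E = 1)
    (hnonneg : ∀ i m, 0 ≤ E i m)
    (hdisj : ∀ i m m', E i m ≠ 0 → E i m' ≠ 0 → m = m')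
    (lam : ℝ) (hlam0 : 0 ≤ lam) (hlam1 : lam < 1)
    (hEig1 : ∀ v : Fin N → ℝ, hatA.mulVec v = v ↔
      v ∈ Submodule.span ℝ (Set.range fun m => fun i => E i m))
    (hOther : ∀ (μ : ℝ) (v : Fin N → ℝ), v ≠ 0 → hatA.mulVec v = μ • v →
      μ = 1 ∨ |μ| ≤ lam)
    (s : ℝ) (hs : 0 ≤ s)
    (W : ℕ → Matrix (Fin C) (Fin C) ℝ)
    (hW : ∀ l, ∀ x : Fin C → ℝ,
      ∑ j, (Matrix.vecMul x (W l) j) ^ 2 ≤ s ^ 2 * ∑ j, (x j) ^ 2)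
    (α : ℝ) (hα0 : 0 ≤ α) (hα1 : α ≤ 1)
    (MS : Set (Matrix (Fin N) (Fin C) ℝ))
    (hMS : MS = {H | ∃ Cm : Matrix (Fin M) (Fin C) ℝ, H = E * Cm})
    (H : ℕ → Matrix (Fin N) (Fin C) ℝ)
    (hrec : ∀ l, H (l + 1) = relu (hatA * H l * W l) + α • H l) :
    (∀ l, distTo MS (H (l + 1)) ≤ (s * lam + α) * distTo MS (H l)) ∧
    (s * lam + α < 1 →
      (∀ l, distTo MS (H l) ≤ (s * lam + α) ^ l * distTo MS (H 0)) ∧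
      Tendsto (fun l => distTo MS (H l)) atTop (nhds 0)) :=
  resgcn_over_smoothing_general N M C hatA hsymm E hortho hnonneg hdisj lam hlam0 hEig1 hOther s hs
    W hW α hα0 MS hMS H hrec
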